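/- Define s : ZMod 64 → H by s(t) = i^(a·b) · j^⌊a·b/2⌋ where a = t.val / 8 and b = t.val mod 8 (row-by-row enumeration of the 8×8 array S(a,b) = i^(ab) j^⌊ab/2⌋). Then s is perfect: Σ_{t ∈ ZMod 64} s(t)·(s(t+τ))* = 0 for every τ ∈ ZMod 64 with τ ≠ 0. -/

import Mathlib

/-! Every entry of the sequence lies in `{±1, ±i, ±j, ±k}`, so the sequence is the image of an
integral quaternion sequence under the coefficientwise map `ℍ[ℤ] → ℍ[ℝ]`. That map is a ring
homomorphism commuting with conjugation, hence it carries autocorrelations to autocorrelations, and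
the 63 nontrivial autocorrelations of the integral sequence are checked to vanish by the kernel. -/

noncomputable def qi : Quaternion ℝ := ⟨0,1,0,0⟩
noncomputable def qj : Quaternion ℝ := ⟨0,0,1,0⟩
noncomputable def qk : Quaternion ℝ := ⟨0,0,0,1⟩

open Quaternion

namespace Quaternion

variable {R S : Type*} [CommRing R] [CommRing S]

instance [DecidableEq R] : DecidableEq ℍ[R] :=
  fun _ _ => decidable_of_iff _ QuaternionAlgebra.ext_iff.symm

def map (f : R →+* S) : ℍ[R] →+* ℍ[S] where
  toFun q := ⟨f q.re, f q.imI, f q.imJ, f q.imK⟩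
  map_one' := by ext <;> simp
  map_mul' a b := by
    ext <;> simp only [re_mul, imI_mul, imJ_mul, imK_mul] <;> erw [QuaternionAlgebra.mk_mul_mk] <;>
      simp <;> ring
  map_zero' := by ext <;> simp
  map_add' a b := by ext <;> simp only [re_add, imI_add, imJ_add, imK_add, map_add] <;> rfl

variable (f : R →+* S) (q : ℍ[R])

@[simp] theorem re_map : (map f q).re = f q.re := rfl
@[simp] theorem imI_map : (map f q).imI = f q.imI := rfl
@[simp] theorem imJ_map : (map f q).imJ = f q.imJ := rfl
@[simp] theorem imK_map : (map f q).imK = f q.imK := rfl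

theorem map_star : map f (star q) = star (map f q) := by
  ext <;> simp

end Quaternion

section Autocorrelation

variable {G R S F : Type*} [AddGroup G] [Fintype G]
  [NonUnitalNonAssocSemiring R] [Star R] [NonUnitalNonAssocSemiring S] [Star S]

def autocorr (s : G → R) (τ : G) : R := ∑ t, s t * star (s (t + τ))

def IsPerfect (s : G → R) : Prop := ∀ τ ≠ 0, autocorr s τ = 0

variable [FunLike F R S] [NonUnitalRingHomClass F R S]

theorem map_autocorr (f : F) (hf : ∀ x, f (star x) = star (f x)) (s : G → R) (τ : G) :
    f (autocorr s τ) = autocorr (f ∘ s) τ := by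
  simp [autocorr, map_sum, hf]

theorem IsPerfect.map {s : G → R} (hs : IsPerfect s) (f : F)
    (hf : ∀ x, f (star x) = star (f x)) : IsPerfect (f ∘ s) := fun τ hτ => by
  rw [← map_autocorr f hf, hs τ hτ, map_zero]

end Autocorrelation

def arraySeq {M : Type*} [Monoid M] (i j : M) (t : ZMod 64) : M :=
  i ^ ((t.val / 8) * (t.val % 8)) * j ^ ((t.val / 8) * (t.val % 8) / 2)

theorem map_arraySeq {M N F : Type*} [Monoid M] [Monoid N] [FunLike F M N] [MonoidHomClass F M N]
    (f : F) (i j : M) (t : ZMod 64) : f (arraySeq i j t) = arraySeq (f i) (f j) t := by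
  simp only [arraySeq, map_mul, map_pow]

def zi : ℍ[ℤ] := ⟨0, 1, 0, 0⟩
def zj : ℍ[ℤ] := ⟨0, 0, 1, 0⟩

theorem map_intCast_zi : map (Int.castRingHom ℝ) zi = qi := by
  ext <;> simp only [re_map, imI_map, imJ_map, imK_map] <;> simp [zi, qi]

theorem map_intCast_zj : map (Int.castRingHom ℝ) zj = qj := by
  ext <;> simp only [re_map, imI_map, imJ_map, imK_map] <;> simp [zj, qj]

theorem isPerfect_arraySeq_int : IsPerfect (arraySeq zi zj) := by
  unfold IsPerfect autocorr
  decide +kernel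

theorem perfect_seq_length64_AOP (s : ZMod 64 → Quaternion ℝ)
    (hs : ∀ t : ZMod 64,
      s t = qi ^ ((t.val / 8) * (t.val % 8)) * qj ^ ((t.val / 8) * (t.val % 8) / 2))
    (τ : ZMod 64) (hτ : τ ≠ 0) :
    ∑ t : ZMod 64, s t * star (s (t + τ)) = 0 := by
  have hs_map : s = map (Int.castRingHom ℝ) ∘ arraySeq zi zj := by
    funext t
    rw [hs, Function.comp_apply, map_arraySeq, map_intCast_zi, map_intCast_zj, arraySeq]
  subst hs_map
  exact isPerfect_arraySeq_int.map _ (Quaternion.map_star _) τ hτ
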